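/- arXiv:math/9405202 — 3 statements merged into one kernel-verified Lean document; each statement's English description precedes it below -/
import Mathlib

section
/- The pigeonhole homogeneity characteristic 𝐡𝐨𝐦_{1c} satisfies max{𝔯, 𝔡} ≤ 𝐡𝐨𝐦_{1c} ≤ max{𝔯_σ, 𝔡}. -/
open Cardinal Set Filter

/-- `g` eventually majorizes `f`. -/
def EvMaj (g f : ℕ → ℕ) : Prop := ∀ᶠ n in Filter.atTop, f n < g n

/-- The dominating number 𝔡. -/
noncomputable def domNum : Cardinal :=
  sInf {c : Cardinal | ∃ D : Set (ℕ → ℕ),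
    (∀ f : ℕ → ℕ, ∃ g ∈ D, EvMaj g f) ∧ c = #D}

/-- `X` splits `Y`: both `X ∩ Y` and `Y \ X` are infinite. -/
def Splits (X Y : Set ℕ) : Prop := (X ∩ Y).Infinite ∧ (Y \ X).Infinite

/-- The unsplitting (reaping) number 𝔯. -/
noncomputable def unsplitNum : Cardinal :=
  sInf {c : Cardinal | ∃ R : Set (Set ℕ),
    (∀ Y ∈ R, Y.Infinite) ∧ (∀ X : Set ℕ, ∃ Y ∈ R, ¬ Splits X Y) ∧ c = #R}

/-- The σ-unsplitting number 𝔯_σ. -/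
noncomputable def unsplitSigmaNum : Cardinal :=
  sInf {c : Cardinal | ∃ 𝒳 : Set (Set ℕ), (∀ X ∈ 𝒳, X.Infinite) ∧
    (∀ Y : ℕ → Set ℕ, ∃ X ∈ 𝒳, ∀ n : ℕ, ¬ Splits (Y n) X) ∧ c = #𝒳}

/-- The pigeonhole homogeneity characteristic 𝐡𝐨𝐦_{1c}. -/
noncomputable def homNum1c : Cardinal :=
  sInf {κ : Cardinal | ∃ ℋ : Set (Set ℕ), (∀ H ∈ ℋ, H.Infinite) ∧
    (∀ f : ℕ → ℕ, ∃ H ∈ ℋ, (∃ m : ℕ, ∀ n ∈ H, f n = m) ∨ Set.InjOn f H) ∧ κ = #ℋ}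

namespace HomAux

open Classical

noncomputable def seqH (X : Set ℕ) (hX : X.Infinite) (g : ℕ → ℕ) (N : ℕ) : ℕ → ℕ
  | 0 => Nat.find (hX.exists_gt N)
  | k + 1 => Nat.find (hX.exists_gt (max (g (seqH X hX g N k)) (seqH X hX g N k)))

variable {X : Set ℕ} {hX : X.Infinite} {g : ℕ → ℕ} {N : ℕ}

lemma seqH_mem : ∀ k, seqH X hX g N k ∈ X
  | 0 => (Nat.find_spec (hX.exists_gt N)).1
  | _ + 1 => (Nat.find_spec (hX.exists_gt _)).1

lemma seqH_zero_gt : N < seqH X hX g N 0 := (Nat.find_spec (hX.exists_gt N)).2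

lemma seqH_succ_gt (k : ℕ) :
    max (g (seqH X hX g N k)) (seqH X hX g N k) < seqH X hX g N (k + 1) :=
  (Nat.find_spec (hX.exists_gt _)).2

lemma seqH_strictMono : StrictMono (seqH X hX g N) :=
  strictMono_nat_of_lt_succ fun k => lt_of_le_of_lt (le_max_right _ _) (seqH_succ_gt k)

lemma seqH_gt_g (k : ℕ) : g (seqH X hX g N k) < seqH X hX g N (k + 1) :=
  lt_of_le_of_lt (le_max_left _ _) (seqH_succ_gt k)

lemma seqH_ge_N (k : ℕ) : N < seqH X hX g N k :=
  lt_of_lt_of_le seqH_zero_gt (seqH_strictMono.monotone (Nat.zero_le k))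

lemma seqH_range_infinite : (Set.range (seqH X hX g N)).Infinite :=
  Set.infinite_range_of_injective seqH_strictMono.injective

noncomputable def bigM (X : Set ℕ) (f : ℕ → ℕ) (n : ℕ) : ℕ := sSup (f '' (X ∩ Set.Iic n))

noncomputable def phi (X : Set ℕ) (f : ℕ → ℕ) (n : ℕ) : ℕ :=
  sSup {x | x ∈ X ∧ f x ≤ bigM X f n}

lemma le_bigM {f : ℕ → ℕ} {y n : ℕ} (hy : y ∈ X) (hyn : y ≤ n) : f y ≤ bigM X f n := by
  apply le_csSup
  · exact (((Set.finite_Iic n).inter_of_right X).image f).bddAbove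
  · exact ⟨y, ⟨hy, hyn⟩, rfl⟩

lemma phi_set_finite {f : ℕ → ℕ} (hfin : ∀ m, (X ∩ f ⁻¹' {m}).Finite) (M : ℕ) :
    {x | x ∈ X ∧ f x ≤ M}.Finite := by
  have hsub : {x | x ∈ X ∧ f x ≤ M} ⊆ ⋃ j ∈ Set.Iic M, X ∩ f ⁻¹' {j} := by
    rintro x ⟨hx, hfx⟩
    exact Set.mem_biUnion hfx ⟨hx, rfl⟩
  exact (Set.Finite.biUnion (Set.finite_Iic M) fun j _ => hfin j).subset hsub

lemma bigM_lt {f : ℕ → ℕ} (hfin : ∀ m, (X ∩ f ⁻¹' {m}).Finite) {x n : ℕ}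
    (hx : x ∈ X) (hgt : phi X f n < x) : bigM X f n < f x := by
  by_contra h
  push_neg at h
  have hxmem : x ∈ {x | x ∈ X ∧ f x ≤ bigM X f n} := ⟨hx, h⟩
  have h6 : x ≤ phi X f n := le_csSup (phi_set_finite hfin (bigM X f n)).bddAbove hxmem
  omega

lemma injOn_seqH {f : ℕ → ℕ} (hfin : ∀ m, (X ∩ f ⁻¹' {m}).Finite)
    (hg : ∀ n, N ≤ n → phi X f n < g n) :
    Set.InjOn f (Set.range (seqH X hX g N)) := by
  set s := seqH X hX g N with hs
  have key : ∀ k i, i ≤ k → f (s i) < f (s (k + 1)) := by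
    intro k i hik
    have h1 : phi X f (s k) < g (s k) := hg _ (le_of_lt (seqH_ge_N k))
    have h3 : phi X f (s k) < s (k + 1) := lt_trans h1 (seqH_gt_g k)
    have h4 : bigM X f (s k) < f (s (k + 1)) := bigM_lt hfin (seqH_mem _) h3
    have h5 : f (s i) ≤ bigM X f (s k) := le_bigM (seqH_mem _) (seqH_strictMono.monotone hik)
    omega
  rintro a ⟨i, rfl⟩ b ⟨j, rfl⟩ hfab
  rcases lt_trichotomy i j with h | h | h
  · obtain ⟨j', rfl⟩ : ∃ j', j = j' + 1 := ⟨j - 1, by omega⟩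
    have := key j' i (by omega); omega
  · rw [h]
  · obtain ⟨i', rfl⟩ : ∃ i', i = i' + 1 := ⟨i - 1, by omega⟩
    have := key i' j (by omega); omega

noncomputable def Sseq (Y : ℕ → Set ℕ) : ℕ → Set ℕ
  | 0 => Set.univ
  | n + 1 =>
      if (Sseq Y n ∩ Y n).Infinite then Sseq Y n ∩ Y n else Sseq Y n \ Y n

variable {Y : ℕ → Set ℕ}

lemma Sseq_infinite : ∀ n, (Sseq Y n).Infinite := by
  intro n
  induction n with
  | zero => exact Set.infinite_univ
  | succ n ih =>
    rw [Sseq]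
    by_cases h : (Sseq Y n ∩ Y n).Infinite
    · rwa [if_pos h]
    · rw [if_neg h]
      have heq : Sseq Y n \ Y n = Sseq Y n \ (Sseq Y n ∩ Y n) := by
        ext x; simp only [Set.mem_diff, Set.mem_inter_iff]; tauto
      rw [heq]
      exact ih.diff (Set.not_infinite.1 h)

lemma Sseq_succ_subset (n : ℕ) : Sseq Y (n + 1) ⊆ Sseq Y n := by
  rw [Sseq]
  by_cases h : (Sseq Y n ∩ Y n).Infinite
  · rw [if_pos h]; exact Set.inter_subset_left
  · rw [if_neg h]; exact Set.diff_subset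

lemma Sseq_subset {n m : ℕ} (h : n ≤ m) : Sseq Y m ⊆ Sseq Y n := by
  induction m with
  | zero => cases Nat.le_zero.1 h; exact subset_rfl
  | succ m ih =>
    rcases Nat.lt_or_ge n (m + 1) with h' | h'
    · exact (Sseq_succ_subset m).trans (ih (by omega))
    · have : n = m + 1 := by omega
      rw [this]

noncomputable def tseq (Y : ℕ → Set ℕ) : ℕ → ℕ
  | 0 => Nat.find ((Sseq_infinite (Y := Y) 0).exists_gt 0)
  | n + 1 => Nat.find ((Sseq_infinite (Y := Y) (n + 1)).exists_gt (tseq Y n))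

lemma tseq_mem : ∀ n, tseq Y n ∈ Sseq Y n
  | 0 => (Nat.find_spec ((Sseq_infinite (Y := Y) 0).exists_gt 0)).1
  | n + 1 => (Nat.find_spec ((Sseq_infinite (Y := Y) (n + 1)).exists_gt (tseq Y n))).1

lemma tseq_strictMono : StrictMono (tseq Y) :=
  strictMono_nat_of_lt_succ fun n =>
    (Nat.find_spec ((Sseq_infinite (Y := Y) (n + 1)).exists_gt (tseq Y n))).2

lemma tseq_not_splits (n : ℕ) : ¬ Splits (Y n) (Set.range (tseq Y)) := by
  have hsub : Set.range (tseq Y) \ Sseq Y (n + 1) ⊆ tseq Y '' (Set.Iio (n + 1)) := by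
    rintro x ⟨⟨m, rfl⟩, hx⟩
    refine ⟨m, ?_, rfl⟩
    simp only [Set.mem_Iio]
    by_contra h
    exact hx (Sseq_subset (by omega) (tseq_mem m))
  have hfin : (Set.range (tseq Y) \ Sseq Y (n + 1)).Finite :=
    ((Set.finite_Iio (n + 1)).image _).subset hsub
  by_cases h : (Sseq Y n ∩ Y n).Infinite
  · have hS : Sseq Y (n + 1) ⊆ Y n := by
      rw [Sseq, if_pos h]; exact Set.inter_subset_right
    rintro ⟨-, h2⟩
    exact h2 (hfin.subset fun x ⟨hx1, hx2⟩ => ⟨hx1, fun hc => hx2 (hS hc)⟩)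
  · have hS : ∀ x ∈ Sseq Y (n + 1), x ∉ Y n := by
      intro x hx
      rw [Sseq, if_neg h] at hx
      exact hx.2
    rintro ⟨h1, -⟩
    apply h1
    apply hfin.subset
    rintro x ⟨hx1, hx2⟩
    exact ⟨hx2, fun hc => hS x hc hx1⟩

def aseq (f : ℕ → ℕ) : ℕ → ℕ
  | 0 => 0
  | k + 1 => f (aseq f k)

variable {f : ℕ → ℕ}

lemma aseq_ge (hf : ∀ n, n + 2 ≤ f n) : ∀ k, 2 * k ≤ aseq f k := by
  intro k
  induction k with
  | zero => simp [aseq]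
  | succ k ih => have := hf (aseq f k); rw [aseq]; omega

lemma aseq_strictMono (hf : ∀ n, n + 2 ≤ f n) : StrictMono (aseq f) :=
  strictMono_nat_of_lt_succ fun k => by have := hf (aseq f k); rw [aseq]; omega

noncomputable def Fblock (f : ℕ → ℕ) (m : ℕ) : ℕ :=
  Nat.findGreatest (fun k => aseq f k ≤ m) m

lemma aseq_Fblock_le (m : ℕ) : aseq f (Fblock f m) ≤ m :=
  Nat.findGreatest_spec (P := fun k => aseq f k ≤ m) (m := 0) (Nat.zero_le m) (by simp [aseq])

lemma lt_aseq_Fblock (hf : ∀ n, n + 2 ≤ f n) (m : ℕ) : m < aseq f (Fblock f m + 1) := by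
  by_contra h
  push_neg at h
  have h2 : Fblock f m + 1 ≤ m := le_trans (by have := aseq_ge hf (Fblock f m + 1); omega) h
  have := Nat.le_findGreatest (P := fun k => aseq f k ≤ m) h2 h
  rw [Fblock] at *
  omega

/-! Nonemptiness of the defining sets. -/

lemma homSet_nonempty : {κ : Cardinal | ∃ ℋ : Set (Set ℕ), (∀ H ∈ ℋ, H.Infinite) ∧
    (∀ f : ℕ → ℕ, ∃ H ∈ ℋ, (∃ m : ℕ, ∀ n ∈ H, f n = m) ∨ Set.InjOn f H) ∧
    κ = #ℋ}.Nonempty := by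
  refine ⟨_, {H : Set ℕ | H.Infinite}, fun H h => h, ?_, rfl⟩
  intro f
  by_cases hf : ∃ m, (f ⁻¹' {m}).Infinite
  · obtain ⟨m, hm⟩ := hf
    exact ⟨f ⁻¹' {m}, hm, Or.inl ⟨m, fun n hn => hn⟩⟩
  · push_neg at hf
    have hfin : ∀ m, ((Set.univ : Set ℕ) ∩ f ⁻¹' {m}).Finite := fun m => by
      rw [Set.univ_inter]; exact hf m
    refine ⟨Set.range (seqH Set.univ Set.infinite_univ
      (fun n => phi Set.univ f n + 1) 0), seqH_range_infinite, Or.inr ?_⟩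
    exact injOn_seqH hfin (fun n _ => by omega)

lemma domSet_nonempty : {c : Cardinal | ∃ D : Set (ℕ → ℕ),
    (∀ f : ℕ → ℕ, ∃ g ∈ D, EvMaj g f) ∧ c = #D}.Nonempty :=
  ⟨_, Set.univ, fun f => ⟨fun n => f n + 1, Set.mem_univ _,
    Filter.Eventually.of_forall fun n => Nat.lt_succ_self (f n)⟩, rfl⟩

lemma rsigmaSet_nonempty : {c : Cardinal | ∃ 𝒳 : Set (Set ℕ), (∀ X ∈ 𝒳, X.Infinite) ∧
    (∀ Y : ℕ → Set ℕ, ∃ X ∈ 𝒳, ∀ n : ℕ, ¬ Splits (Y n) X) ∧ c = #𝒳}.Nonempty :=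
  ⟨_, {X : Set ℕ | X.Infinite}, fun X h => h,
    fun Y => ⟨Set.range (tseq Y), Set.infinite_range_of_injective tseq_strictMono.injective,
      fun n => tseq_not_splits n⟩, rfl⟩

lemma aleph0_le_domNum : ℵ₀ ≤ domNum := by
  apply le_csInf domSet_nonempty
  rintro c ⟨D, hD, rfl⟩
  by_contra hlt
  push_neg at hlt
  have hDfin : D.Finite := Cardinal.lt_aleph0_iff_set_finite.1 hlt
  obtain ⟨g, hg, hmaj⟩ := hD (fun n => sSup ((fun g : ℕ → ℕ => g n) '' D) + 1)
  obtain ⟨N, hN⟩ := Filter.eventually_atTop.1 hmaj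
  have h1 : sSup ((fun g : ℕ → ℕ => g N) '' D) + 1 < g N := hN N le_rfl
  have h2 : g N ≤ sSup ((fun g : ℕ → ℕ => g N) '' D) :=
    le_csSup ((hDfin.image _).bddAbove) ⟨g, hg, rfl⟩
  exact lt_irrefl (g N) (lt_of_le_of_lt h2 (lt_trans (Nat.lt_succ_self _) h1))

/-! The lower bounds. -/

lemma unsplitNum_le_of_hom :
    ∀ κ ∈ {κ : Cardinal | ∃ ℋ : Set (Set ℕ), (∀ H ∈ ℋ, H.Infinite) ∧
      (∀ f : ℕ → ℕ, ∃ H ∈ ℋ, (∃ m : ℕ, ∀ n ∈ H, f n = m) ∨ Set.InjOn f H) ∧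
      κ = #ℋ}, unsplitNum ≤ κ := by
  rintro κ ⟨ℋ, hinf, hprop, rfl⟩
  apply csInf_le (OrderBot.bddBelow _)
  refine ⟨ℋ, hinf, ?_, rfl⟩
  intro X
  obtain ⟨H, hH, hcase⟩ := hprop (fun n => if n ∈ X then 1 else 0)
  refine ⟨H, hH, ?_⟩
  rcases hcase with ⟨m, hm⟩ | hinj
  · obtain ⟨a, ha⟩ := (hinf H hH).nonempty
    by_cases hax : a ∈ X
    · have hm1 : m = 1 := by have := hm a ha; simp [hax] at this; omega
      rintro ⟨-, h2⟩
      have hempty : H \ X = ∅ := by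
        ext n
        simp only [Set.mem_diff, Set.mem_empty_iff_false, iff_false, not_and, not_not]
        intro hn
        by_contra hnX
        have := hm n hn
        simp [hnX, hm1] at this
      rw [hempty] at h2
      exact h2 Set.finite_empty
    · have hm0 : m = 0 := by have := hm a ha; simp [hax] at this; omega
      rintro ⟨h1, -⟩
      have hempty : X ∩ H = ∅ := by
        ext n
        simp only [Set.mem_inter_iff, Set.mem_empty_iff_false, iff_false, not_and]
        intro hnX hn
        have := hm n hn
        simp [hnX, hm0] at this
      rw [hempty] at h1
      exact h1 Set.finite_empty
  · exfalso
    obtain ⟨a, ha⟩ := (hinf H hH).nonempty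
    obtain ⟨b, hb, hab⟩ := (hinf H hH).exists_gt a
    obtain ⟨c, hc, hbc⟩ := (hinf H hH).exists_gt b
    have eq1 : ∀ {x y : ℕ}, x ∈ H → y ∈ H →
        ((x ∈ X ∧ y ∈ X) ∨ (x ∉ X ∧ y ∉ X)) → x = y := by
      intro x y hx hy hcases
      apply hinj hx hy
      rcases hcases with ⟨p, q⟩ | ⟨p, q⟩ <;> simp [p, q]
    by_cases h1 : a ∈ X <;> by_cases h2 : b ∈ X <;> by_cases h3 : c ∈ X
    all_goals first
      | (have := eq1 ha hb (Or.inl ⟨h1, h2⟩); omega)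
      | (have := eq1 ha hb (Or.inr ⟨h1, h2⟩); omega)
      | (have := eq1 hb hc (Or.inl ⟨h2, h3⟩); omega)
      | (have := eq1 hb hc (Or.inr ⟨h2, h3⟩); omega)
      | (have := eq1 ha hc (Or.inl ⟨h1, h3⟩); omega)
      | (have := eq1 ha hc (Or.inr ⟨h1, h3⟩); omega)

lemma domNum_le_of_hom :
    ∀ κ ∈ {κ : Cardinal | ∃ ℋ : Set (Set ℕ), (∀ H ∈ ℋ, H.Infinite) ∧
      (∀ f : ℕ → ℕ, ∃ H ∈ ℋ, (∃ m : ℕ, ∀ n ∈ H, f n = m) ∨ Set.InjOn f H) ∧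
      κ = #ℋ}, domNum ≤ κ := by
  rintro κ ⟨ℋ, hinf, hprop, rfl⟩
  set DD : Set (ℕ → ℕ) :=
    Set.range (fun H : ↥ℋ =>
      fun n => seqH (H : Set ℕ) (hinf H H.2) (fun _ => 0) 0 (n + 1)) with hDD
  have hdom : ∀ f₀ : ℕ → ℕ, ∃ g ∈ DD, EvMaj g f₀ := by
    intro f₀
    set f : ℕ → ℕ := fun n => n + 2 + (Finset.range (n + 1)).sup f₀ with hf
    have hf2 : ∀ n, n + 2 ≤ f n := fun n => by simp only [hf]; omega
    have hf0 : ∀ n, f₀ n ≤ f n := fun n => by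
      have : f₀ n ≤ (Finset.range (n + 1)).sup f₀ :=
        Finset.le_sup (Finset.mem_range.2 (Nat.lt_succ_self n))
      simp only [hf]; omega
    have hfmono : StrictMono f := by
      intro a b hab
      have : (Finset.range (a + 1)).sup f₀ ≤ (Finset.range (b + 1)).sup f₀ :=
        Finset.sup_mono (Finset.range_subset_range.2 (by omega))
      simp only [hf]; omega
    obtain ⟨H, hH, hcase⟩ := hprop (Fblock f)
    have hHinf := hinf H hH
    set s : ℕ → ℕ := fun k => seqH H hHinf (fun _ => 0) 0 k with hs
    have hsmem : ∀ k, s k ∈ H := fun k => seqH_mem k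
    have hsmono : StrictMono s := seqH_strictMono
    rcases hcase with ⟨m, hm⟩ | hinj
    · exfalso
      apply hHinf
      apply (Set.finite_Iio (aseq f (m + 1))).subset
      intro n hn
      have h1 := lt_aseq_Fblock hf2 n
      rw [hm n hn] at h1
      exact Set.mem_Iio.2 h1
    · refine ⟨_, ⟨⟨H, hH⟩, rfl⟩, ?_⟩
      rw [EvMaj, Filter.eventually_atTop]
      refine ⟨aseq f 1, fun n hn => ?_⟩
      have hk1 : 1 ≤ Fblock f n :=
        Nat.le_findGreatest (P := fun k => aseq f k ≤ n)
          (le_trans (by have := aseq_ge hf2 1; omega) hn) hn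
      set k := Fblock f n with hkdef
      show f₀ n < s (n + 1)
      by_contra hcon
      push_neg at hcon
      have hfn : f n < aseq f (k + 2) := by
        have h1 : n < aseq f (k + 1) := lt_aseq_Fblock hf2 n
        exact hfmono h1
      have hsi : ∀ i, i ≤ n + 1 → s i < aseq f (k + 2) := by
        intro i hi
        have h1 := hsmono.monotone hi
        have h2 := hf0 n
        omega
      have hFsi : ∀ i, i ≤ n + 1 → Fblock f (s i) < k + 2 := by
        intro i hi
        by_contra hcc
        push_neg at hcc
        have h1 := (aseq_strictMono hf2).monotone hcc
        have h2 := aseq_Fblock_le (f := f) (s i)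
        have h3 := hsi i hi
        omega
      have hinj2 : Function.Injective
          (fun i : Fin (n + 2) =>
            (⟨Fblock f (s i), hFsi i (Nat.lt_succ_iff.1 i.isLt)⟩ : Fin (k + 2))) := by
        intro i j hij
        simp only [Fin.mk.injEq] at hij
        have := hinj (hsmem i) (hsmem j) hij
        exact Fin.ext (hsmono.injective this)
      have hcard := Fintype.card_le_of_injective _ hinj2
      simp only [Fintype.card_fin] at hcard
      have hk2 := aseq_ge hf2 k
      have hk3 := aseq_Fblock_le (f := f) n
      rw [← hkdef] at hk3
      omega
  calc domNum ≤ #↥DD := csInf_le (OrderBot.bddBelow _) ⟨DD, hdom, rfl⟩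
    _ ≤ #↥ℋ := hDD ▸ Cardinal.mk_range_le

/-! The upper bound. -/

lemma homNum1c_le : homNum1c ≤ max unsplitSigmaNum domNum := by
  obtain ⟨𝒳, h𝒳inf, h𝒳, h𝒳card⟩ :
      ∃ 𝒳 : Set (Set ℕ), (∀ X ∈ 𝒳, X.Infinite) ∧
        (∀ Y : ℕ → Set ℕ, ∃ X ∈ 𝒳, ∀ n : ℕ, ¬ Splits (Y n) X) ∧
        unsplitSigmaNum = #𝒳 :=
    csInf_mem rsigmaSet_nonempty
  obtain ⟨D, hD, hDcard⟩ :
      ∃ D : Set (ℕ → ℕ), (∀ f : ℕ → ℕ, ∃ g ∈ D, EvMaj g f) ∧ domNum = #D :=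
    csInf_mem domSet_nonempty
  set Fam : (↥𝒳 × ℕ) ⊕ (↥𝒳 × (↥D × ℕ)) → Set ℕ :=
    Sum.elim (fun p => (p.1 : Set ℕ) ∩ Set.Ici p.2)
      (fun p => Set.range (seqH (p.1 : Set ℕ) (h𝒳inf p.1 p.1.2) (p.2.1 : ℕ → ℕ) p.2.2))
    with hFam
  set ℋ := Set.range Fam with hℋ
  have hmem_inf : ∀ H ∈ ℋ, H.Infinite := by
    rintro H ⟨x, rfl⟩
    rcases x with p | p
    · show ((p.1 : Set ℕ) ∩ Set.Ici p.2).Infinite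
      have heq : (p.1 : Set ℕ) ∩ Set.Ici p.2 = (p.1 : Set ℕ) \ Set.Iio p.2 := by
        ext x; simp [Set.mem_Iio, not_lt]
      rw [heq]
      exact (h𝒳inf p.1 p.1.2).diff (Set.finite_Iio _)
    · exact seqH_range_infinite
  have hprop : ∀ f : ℕ → ℕ, ∃ H ∈ ℋ, (∃ m : ℕ, ∀ n ∈ H, f n = m) ∨ Set.InjOn f H := by
    intro f
    obtain ⟨X, hX𝒳, hXns⟩ := h𝒳 (fun m => f ⁻¹' {m})
    by_cases hcexists : ∃ m, (X \ f ⁻¹' {m}).Finite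
    · obtain ⟨m, hm⟩ := hcexists
      obtain ⟨b, hb⟩ := hm.bddAbove
      refine ⟨X ∩ Set.Ici (b + 1), ⟨Sum.inl (⟨X, hX𝒳⟩, b + 1), rfl⟩, Or.inl ⟨m, ?_⟩⟩
      rintro n ⟨hnX, hnk⟩
      by_contra hne
      have hmem : n ∈ X \ f ⁻¹' {m} := ⟨hnX, fun h => hne h⟩
      have := hb hmem
      simp only [Set.mem_Ici] at hnk
      omega
    · push_neg at hcexists
      have hfin : ∀ m, (X ∩ f ⁻¹' {m}).Finite := by
        intro m
        have h := hXns m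
        rw [Splits, not_and] at h
        have hA : ¬ ((f ⁻¹' {m} ∩ X).Infinite) := fun hA => h hA (hcexists m)
        rw [Set.not_infinite] at hA
        rwa [Set.inter_comm] at hA
      obtain ⟨g, hgD, hgmaj⟩ := hD (phi X f)
      obtain ⟨N, hN⟩ := Filter.eventually_atTop.1 hgmaj
      refine ⟨_, ⟨Sum.inr (⟨X, hX𝒳⟩, ⟨g, hgD⟩, N), rfl⟩, Or.inr ?_⟩
      exact injOn_seqH hfin (fun n hn => hN n hn)
  have hle : homNum1c ≤ #↥ℋ :=
    csInf_le (OrderBot.bddBelow _) ⟨ℋ, hmem_inf, hprop, rfl⟩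
  refine le_trans hle ?_
  have h1 : #↥ℋ ≤ #((↥𝒳 × ℕ) ⊕ (↥𝒳 × (↥D × ℕ))) := Cardinal.mk_range_le
  have h2 : #((↥𝒳 × ℕ) ⊕ (↥𝒳 × (↥D × ℕ))) = #↥𝒳 * ℵ₀ + #↥𝒳 * (#↥D * ℵ₀) := by
    simp
  set M := max unsplitSigmaNum domNum with hM
  have hMa : ℵ₀ ≤ M := le_trans aleph0_le_domNum (le_max_right _ _)
  have hXM : #↥𝒳 ≤ M := h𝒳card ▸ le_max_left _ _
  have hDM : #↥D ≤ M := hDcard ▸ le_max_right _ _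
  calc #↥ℋ ≤ #↥𝒳 * ℵ₀ + #↥𝒳 * (#↥D * ℵ₀) := h2 ▸ h1
    _ ≤ M * M + M * (M * M) :=
      add_le_add (mul_le_mul' hXM hMa) (mul_le_mul' hXM (mul_le_mul' hDM hMa))
    _ = M := by
      rw [Cardinal.mul_eq_self hMa, Cardinal.mul_eq_self hMa, Cardinal.add_eq_self hMa]

end HomAux

theorem homNum1c_bounds :
    max unsplitNum domNum ≤ homNum1c ∧ homNum1c ≤ max unsplitSigmaNum domNum := by
  constructor
  · apply max_le
    · exact le_csInf HomAux.homSet_nonempty HomAux.unsplitNum_le_of_hom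
    · exact le_csInf HomAux.homSet_nonempty HomAux.domNum_le_of_hom
  · exact HomAux.homNum1c_le
end

section
/- (Shelah) Every independent family of infinite subsets of ℕ whose cardinality is strictly less than the dominating number 𝔡 fails to be a maximal independent family; consequently 𝔡 ≤ 𝔦, where 𝔦 is the least cardinality of a maximal independent family. -/
open Cardinal Set Filter

/-- `ℐ` is an independent family: an infinite family of infinite subsets of ℕ such that
every finite Boolean combination of members is infinite. -/
def IndepFamily (ℐ : Set (Set ℕ)) : Prop :=
  ℐ.Infinite ∧ (∀ X ∈ ℐ, X.Infinite) ∧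
    ∀ 𝒳 𝒴 : Finset (Set ℕ), ↑𝒳 ⊆ ℐ → ↑𝒴 ⊆ ℐ → Disjoint 𝒳 𝒴 →
      ((⋂ X ∈ 𝒳, X) ∩ ⋂ Y ∈ 𝒴, (Set.univ \ Y)).Infinite

/-- A maximal independent family: no infinite set can be added to get a strictly
larger independent family. -/
def MaxIndepFamily (ℐ : Set (Set ℕ)) : Prop :=
  IndepFamily ℐ ∧ ¬ ∃ Z : Set ℕ, Z.Infinite ∧ Z ∉ ℐ ∧ IndepFamily (insert Z ℐ)

/-- The independence number 𝔦. -/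
noncomputable def indepNum : Cardinal :=
  sInf {c : Cardinal | ∃ ℐ : Set (Set ℕ), MaxIndepFamily ℐ ∧ c = #ℐ}

namespace ShelahDI



/-- Boolean combination. -/
def Wc (𝒳 𝒴 : Finset (Set ℕ)) : Set ℕ := (⋂ X ∈ 𝒳, X) ∩ ⋂ Y ∈ 𝒴, (Set.univ \ Y)

lemma mem_Wc {𝒳 𝒴 : Finset (Set ℕ)} {x : ℕ} :
    x ∈ Wc 𝒳 𝒴 ↔ (∀ X ∈ 𝒳, x ∈ X) ∧ (∀ Y ∈ 𝒴, x ∉ Y) := by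
  simp [Wc, Set.mem_iInter, Set.mem_diff]

/-- Pattern combination over the sequence `A`. -/
def Pat (A : ℕ → Set ℕ) (u : ℕ → Bool) (ℓ : ℕ) : Set ℕ :=
  {x | ∀ i < ℓ, (x ∈ A i ↔ u i = true)}

lemma pat_congr {A : ℕ → Set ℕ} {u u' : ℕ → Bool} {ℓ : ℕ}
    (h : ∀ i < ℓ, u i = u' i) : Pat A u ℓ = Pat A u' ℓ := by
  ext x; constructor <;> intro hx i hi
  · rw [← h i hi]; exact hx i hi
  · rw [h i hi]; exact hx i hi

lemma key {ℐ : Set (Set ℕ)} {A : ℕ → Set ℕ} (hI : IndepFamily ℐ)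
    (hAmem : ∀ i, A i ∈ ℐ) (hAinj : Function.Injective A)
    (𝒳 𝒴 : Finset (Set ℕ)) (hX : ↑𝒳 ⊆ ℐ) (hY : ↑𝒴 ⊆ ℐ) (hd : Disjoint 𝒳 𝒴)
    (hXA : ∀ i, A i ∉ 𝒳) (hYA : ∀ i, A i ∉ 𝒴) (u : ℕ → Bool) (ℓ : ℕ) :
    (Wc 𝒳 𝒴 ∩ Pat A u ℓ).Infinite := by
  classical
  set Xu := ((Finset.range ℓ).filter (fun i => u i = true)).image A with hXu
  set Yu := ((Finset.range ℓ).filter (fun i => ¬ u i = true)).image A with hYu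
  have hsub : Wc (𝒳 ∪ Xu) (𝒴 ∪ Yu) ⊆ Wc 𝒳 𝒴 ∩ Pat A u ℓ := by
    intro x hx
    rw [mem_Wc] at hx
    refine ⟨mem_Wc.mpr ⟨fun X h => hx.1 X (Finset.mem_union_left _ h),
      fun Y h => hx.2 Y (Finset.mem_union_left _ h)⟩, ?_⟩
    intro i hi
    by_cases hui : u i = true
    · have hmem : A i ∈ Xu := by
        rw [hXu]
        exact Finset.mem_image_of_mem A (Finset.mem_filter.mpr ⟨Finset.mem_range.mpr hi, hui⟩)
      simp only [hui, iff_true]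
      exact hx.1 _ (Finset.mem_union_right _ hmem)
    · have hmem : A i ∈ Yu := by
        rw [hYu]
        exact Finset.mem_image_of_mem A (Finset.mem_filter.mpr ⟨Finset.mem_range.mpr hi, hui⟩)
      simp only [Bool.not_eq_true] at hui
      simp only [hui]
      simp only [Bool.false_eq_true, iff_false]
      exact hx.2 _ (Finset.mem_union_right _ hmem)
  apply Set.Infinite.mono hsub
  apply hI.2.2
  · intro X hXm
    rcases Finset.mem_union.mp hXm with h | h
    · exact hX h
    · obtain ⟨i, _, rfl⟩ := Finset.mem_image.mp h
      exact hAmem i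
  · intro Y hYm
    rcases Finset.mem_union.mp hYm with h | h
    · exact hY h
    · obtain ⟨i, _, rfl⟩ := Finset.mem_image.mp h
      exact hAmem i
  · rw [Finset.disjoint_left]
    intro a ha hb
    rcases Finset.mem_union.mp ha with h1 | h1 <;> rcases Finset.mem_union.mp hb with h2 | h2
    · exact (Finset.disjoint_left.mp hd h1) h2
    · obtain ⟨i, _, rfl⟩ := Finset.mem_image.mp h2
      exact hXA i h1
    · obtain ⟨i, _, rfl⟩ := Finset.mem_image.mp h1
      exact hYA i h2
    · obtain ⟨i, hi, rfl⟩ := Finset.mem_image.mp h1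
      obtain ⟨j, hj, hji⟩ := Finset.mem_image.mp h2
      cases hAinj hji
      exact (Finset.mem_filter.mp hj).2 (Finset.mem_filter.mp hi).2

/-- Combination over a subtype-indexed pair of finsets. -/
def WcS {ℐ : Set (Set ℕ)} (𝒳 𝒴 : Finset ↥ℐ) : Set ℕ :=
  (⋂ X ∈ 𝒳, (X : Set ℕ)) ∩ ⋂ Y ∈ 𝒴, (Set.univ \ (Y : Set ℕ))

lemma mem_WcS {ℐ : Set (Set ℕ)} {𝒳 𝒴 : Finset ↥ℐ} {x : ℕ} :
    x ∈ WcS 𝒳 𝒴 ↔ (∀ X ∈ 𝒳, x ∈ (X : Set ℕ)) ∧ (∀ Y ∈ 𝒴, x ∉ (Y : Set ℕ)) := by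
  simp [WcS, Set.mem_iInter, Set.mem_diff]

/-- The set defining the witness-bound function. -/
def DIFset (ℐ : Set (Set ℕ)) (A : ℕ → Set ℕ) (q : Finset ↥ℐ × Finset ↥ℐ) (n : ℕ) : Set ℕ :=
  {m | ∀ j ≤ n, ∀ u : ℕ → Bool, (WcS q.1 q.2 ∩ Pat A u (j+2) ∩ Set.Ico j m).Nonempty}

noncomputable def DIF (ℐ : Set (Set ℕ)) (A : ℕ → Set ℕ) (q : Finset ↥ℐ × Finset ↥ℐ) (n : ℕ) : ℕ :=
  sInf (DIFset ℐ A q n)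

lemma core (ℐ : Set (Set ℕ)) (hI : IndepFamily ℐ) (hlt : #↥ℐ < domNum) :
    ∃ Z : Set ℕ, ∀ 𝒳 𝒴 : Finset (Set ℕ), ↑𝒳 ⊆ ℐ → ↑𝒴 ⊆ ℐ → Disjoint 𝒳 𝒴 →
      ((Wc 𝒳 𝒴) ∩ Z).Infinite ∧ ((Wc 𝒳 𝒴) \ Z).Infinite := by
  classical
  obtain ⟨E⟩ : Nonempty (ℕ ↪ ↥ℐ) := ⟨hI.1.natEmbedding⟩
  set A : ℕ → Set ℕ := fun n => (E n : Set ℕ) with hA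
  have hAmem : ∀ i, A i ∈ ℐ := fun i => (E i).2
  have hAinj : Function.Injective A := by
    intro a b hab
    exact E.injective (Subtype.ext hab)
  have hnotdom : ¬ ∀ f : ℕ → ℕ, ∃ g ∈ Set.range (DIF ℐ A), EvMaj g f := by
    intro hdom
    have h1 : domNum ≤ #↥(Set.range (DIF ℐ A)) := csInf_le' ⟨_, hdom, rfl⟩
    have h2 : #↥(Set.range (DIF ℐ A)) ≤ #(Finset ↥ℐ × Finset ↥ℐ) := Cardinal.mk_range_le
    have hinf : Infinite ↥ℐ := hI.1.to_subtype
    have h3 : #(Finset ↥ℐ × Finset ↥ℐ) = #↥ℐ := by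
      have hfs : #(Finset ↥ℐ) = #↥ℐ := Cardinal.mk_finset_of_infinite _
      simp only [Cardinal.mk_prod, Cardinal.lift_id, hfs]
      exact Cardinal.mul_eq_self (Cardinal.infinite_iff.mp hinf)
    exact absurd hlt (not_lt.mpr (h1.trans (h2.trans_eq h3)))
  push_neg at hnotdom
  obtain ⟨h, hh⟩ := hnotdom
  have hfreq : ∀ q, ∃ᶠ n in Filter.atTop, DIF ℐ A q n ≤ h n := by
    intro q
    have := hh (DIF ℐ A q) ⟨q, rfl⟩
    rw [EvMaj, Filter.not_eventually] at this
    simpa only [not_lt] using this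
  set h' : ℕ → ℕ := fun n => n + 1 + (Finset.range (n+1)).sup h with hh'def
  have hh'le : ∀ n, h n ≤ h' n := by
    intro n
    have : h n ≤ (Finset.range (n+1)).sup h :=
      Finset.le_sup (Finset.mem_range.mpr (Nat.lt_succ_self n))
    simp only [hh'def]
    omega
  have hh'mono : Monotone h' := by
    intro a b hab
    have : (Finset.range (a+1)).sup h ≤ (Finset.range (b+1)).sup h :=
      Finset.sup_mono (Finset.range_subset_range.mpr (by omega))
    simp only [hh'def]
    omega
  have hh'lt : ∀ n, n < h' n := by intro n; simp only [hh'def]; omega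
  set H : ℕ → ℕ := fun k => h'^[k] 0 with hHdef
  have hHsucc : ∀ k, H (k+1) = h' (H k) := by
    intro k
    simp only [hHdef, Function.iterate_succ_apply']
  have hHmono : StrictMono H := by
    apply strictMono_nat_of_lt_succ
    intro k
    rw [hHsucc]
    exact hh'lt (H k)
  have hHk : ∀ k, k ≤ H k := fun k => hHmono.le_apply
  set L : ℕ → ℕ := fun x => sInf {k | x < H (k+1)} with hLdef
  have hLne : ∀ x, {k | x < H (k+1)}.Nonempty := by
    intro x
    exact ⟨x, lt_of_lt_of_le (Nat.lt_succ_self x) (hHk (x+1))⟩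
  have hL2 : ∀ x, x < H (L x + 1) := fun x => Nat.sInf_mem (hLne x)
  have hL1 : ∀ x, H (L x) ≤ x := by
    intro x
    rcases Nat.eq_zero_or_pos (L x) with h0 | hpos
    · rw [h0]; simp [hHdef]
    · have hlt' : L x - 1 < L x := by omega
      have hnm : L x - 1 ∉ {k | x < H (k+1)} := Nat.notMem_of_lt_sInf hlt'
      simp only [Set.mem_setOf_eq, not_lt] at hnm
      have heq : L x - 1 + 1 = L x := by omega
      rwa [heq] at hnm
  refine ⟨{x | x ∈ A (L x)}, ?_⟩
  intro 𝒳 𝒴 hX hY hdisj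
  set m : ℕ := (𝒳 ∪ 𝒴).sup (fun X => if hex : ∃ i, A i = X then hex.choose + 1 else 0) with hmdef
  have hidx : ∀ X ∈ 𝒳 ∪ 𝒴, ∀ i, A i = X → i < m := by
    intro X hXm i hiX
    have hex : ∃ i, A i = X := ⟨i, hiX⟩
    have hieq : i = hex.choose := hAinj (hiX.trans hex.choose_spec.symm)
    have hle : (fun X => if hex' : ∃ i, A i = X then hex'.choose + 1 else 0) X ≤ m :=
      Finset.le_sup (f := fun X => if hex' : ∃ i, A i = X then hex'.choose + 1 else 0) hXm
    simp only [dif_pos hex] at hle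
    omega
  set s : ℕ → Bool := fun i => decide (A i ∈ 𝒳) with hsdef
  set 𝒳' : Finset (Set ℕ) := 𝒳.filter (fun X => ¬ ∃ i, A i = X) with hX'def
  set 𝒴' : Finset (Set ℕ) := 𝒴.filter (fun X => ¬ ∃ i, A i = X) with hY'def
  have hX'sub : ↑𝒳' ⊆ ℐ := fun X hXm => hX (Finset.filter_subset _ _ hXm)
  have hY'sub : ↑𝒴' ⊆ ℐ := fun X hXm => hY (Finset.filter_subset _ _ hXm)
  set q : Finset ↥ℐ × Finset ↥ℐ :=
    (𝒳'.subtype (· ∈ ℐ), 𝒴'.subtype (· ∈ ℐ)) with hqdef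
  have hWqeq : WcS q.1 q.2 = Wc 𝒳' 𝒴' := by
    ext x
    rw [mem_WcS, mem_Wc]
    constructor
    · rintro ⟨h1, h2⟩
      constructor
      · intro X hXm
        exact h1 ⟨X, hX'sub hXm⟩ (Finset.mem_subtype.mpr hXm)
      · intro Y hYm
        exact h2 ⟨Y, hY'sub hYm⟩ (Finset.mem_subtype.mpr hYm)
    · rintro ⟨h1, h2⟩
      constructor
      · rintro ⟨X, hXℐ⟩ hXm
        exact h1 X (Finset.mem_subtype.mp hXm)
      · rintro ⟨Y, hYℐ⟩ hYm
        exact h2 Y (Finset.mem_subtype.mp hYm)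
  have hcomb : ∀ (u : ℕ → Bool) (ℓ : ℕ), (Wc 𝒳' 𝒴' ∩ Pat A u ℓ).Infinite := by
    intro u ℓ
    apply key hI hAmem hAinj 𝒳' 𝒴' hX'sub hY'sub
    · exact Finset.disjoint_filter_filter hdisj
    · intro i hmem
      exact (Finset.mem_filter.mp hmem).2 ⟨i, rfl⟩
    · intro i hmem
      exact (Finset.mem_filter.mp hmem).2 ⟨i, rfl⟩
  have hstep : ∀ (ℓ lo : ℕ), ∃ mm, ∀ u : ℕ → Bool,
      (Wc 𝒳' 𝒴' ∩ Pat A u ℓ ∩ Set.Ico lo mm).Nonempty := by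
    intro ℓ lo
    have h1 : ∀ v : Fin ℓ → Bool, ∃ x,
        x ∈ Wc 𝒳' 𝒴' ∩ Pat A (fun i => if hi : i < ℓ then v ⟨i, hi⟩ else false) ℓ ∧ lo < x := by
      intro v
      obtain ⟨x, hx1, hx2⟩ := (hcomb _ ℓ).exists_gt lo
      exact ⟨x, hx1, hx2⟩
    choose w hw hwlt using h1
    refine ⟨Finset.univ.sup w + 1, fun u => ?_⟩
    set v : Fin ℓ → Bool := fun i => u i.1 with hvdef
    have hPeq : Pat A (fun i => if hi : i < ℓ then v ⟨i, hi⟩ else false) ℓ = Pat A u ℓ := by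
      apply pat_congr
      intro i hi
      simp only [dif_pos hi]
      rfl
    refine ⟨w v, ⟨(hw v).1, ?_⟩, ?_, ?_⟩
    · have h2 := (hw v).2
      rwa [hPeq] at h2
    · exact le_of_lt (hwlt v)
    · exact Nat.lt_succ_of_le (Finset.le_sup (Finset.mem_univ v))
  have hne : ∀ n, (DIFset ℐ A q n).Nonempty := by
    intro n
    have h1 : ∀ j : ℕ, ∃ mm, ∀ u : ℕ → Bool,
        (Wc 𝒳' 𝒴' ∩ Pat A u (j+2) ∩ Set.Ico j mm).Nonempty := fun j => hstep (j+2) j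
    choose M hM using h1
    refine ⟨(Finset.range (n+1)).sup M, ?_⟩
    simp only [DIFset, Set.mem_setOf_eq]
    intro j hj u
    obtain ⟨x, hx1, hx2, hx3⟩ := hM j u
    rw [hWqeq]
    exact ⟨x, hx1, hx2, lt_of_lt_of_le hx3
      (Finset.le_sup (Finset.mem_range.mpr (Nat.lt_succ_of_le hj)))⟩
  have hspec : ∀ n, ∀ j ≤ n, ∀ u : ℕ → Bool,
      (Wc 𝒳' 𝒴' ∩ Pat A u (j+2) ∩ Set.Ico j (DIF ℐ A q n)).Nonempty := by
    intro n
    have hmem : ∀ j ≤ n, ∀ u : ℕ → Bool,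
        (WcS q.1 q.2 ∩ Pat A u (j+2) ∩ Set.Ico j (DIF ℐ A q n)).Nonempty := Nat.sInf_mem (hne n)
    intro j hj u
    have h2 := hmem j hj u
    rwa [hWqeq] at h2
  have hmonoF : ∀ ⦃n n' : ℕ⦄, n ≤ n' → DIF ℐ A q n ≤ DIF ℐ A q n' := by
    intro n n' hnn
    apply Nat.sInf_le
    have hmem : ∀ j ≤ n', ∀ u : ℕ → Bool,
        (WcS q.1 q.2 ∩ Pat A u (j+2) ∩ Set.Ico j (DIF ℐ A q n')).Nonempty := Nat.sInf_mem (hne n')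
    exact fun j hj u => hmem j (hj.trans hnn) u
  have main : ∀ (b : Bool) (N : ℕ), ∃ x, N < x ∧ x ∈ Wc 𝒳 𝒴 ∧ (x ∈ A (L x) ↔ b = true) := by
    intro b N
    obtain ⟨n, hn, hgood⟩ := Filter.frequently_atTop.mp (hfreq q) (H (max m (N+1) + 1))
    set k := L n with hkdef
    have hk1 : H k ≤ n := hL1 n
    have hk2 : n < H (k+1) := hL2 n
    have hmax1 : m ≤ max m (N+1) := le_max_left _ _
    have hmax2 : N+1 ≤ max m (N+1) := le_max_right _ _
    have hkm : max m (N+1) ≤ k := by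
      have h4 : H (max m (N+1) + 1) < H (k+1) := lt_of_le_of_lt hn hk2
      have h5 := hHmono.lt_iff_lt.mp h4
      omega
    have hgk : DIF ℐ A q (H k) ≤ h n := le_trans (hmonoF hk1) hgood
    set u : ℕ → Bool := fun i => if i < m then s i else (b && decide (i = k ∨ i = k+1)) with hudef
    obtain ⟨x, ⟨hxW, hxP⟩, hxlo, hxhi⟩ := hspec (H k) (H k) le_rfl u
    have hxk2 : x < H (k+2) := by
      have e1 : x < DIF ℐ A q (H k) := hxhi
      have e2 : h n ≤ h' n := hh'le n
      have e3 : h' n ≤ h' (H (k+1)) := hh'mono (le_of_lt hk2)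
      have e4 : H (k+2) = h' (H (k+1)) := hHsucc (k+1)
      omega
    have hLxk : L x = k ∨ L x = k+1 := by
      have h1 : k < L x + 1 := by
        have : H k < H (L x + 1) := lt_of_le_of_lt hxlo (hL2 x)
        exact hHmono.lt_iff_lt.mp this
      have h2 : L x < k + 2 := by
        have : H (L x) < H (k+2) := lt_of_le_of_lt (hL1 x) hxk2
        exact hHmono.lt_iff_lt.mp this
      omega
    have hLlt : L x < H k + 2 := by
      have := hHk k
      omega
    have hAx : x ∈ A (L x) ↔ b = true := by
      have hP := hxP (L x) hLlt
      have hu : u (L x) = b := by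
        have hLge : ¬ (L x < m) := by omega
        simp only [hudef, if_neg hLge]
        have hd : decide (L x = k ∨ L x = k+1) = true := by
          rw [decide_eq_true_eq]
          exact hLxk
        rw [hd, Bool.and_true]
      rw [hu] at hP
      exact hP
    have hxW' : x ∈ Wc 𝒳 𝒴 := by
      rw [mem_Wc]
      constructor
      · intro X hXmem
        by_cases hr : ∃ i, A i = X
        · obtain ⟨i, rfl⟩ := hr
          have him : i < m := hidx (A i) (Finset.mem_union_left _ hXmem) i rfl
          have hilt : i < H k + 2 := by
            have := hHk k
            omega
          have hP := hxP i hilt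
          have hsi : u i = true := by
            simp only [hudef, if_pos him, hsdef]
            exact decide_eq_true hXmem
          rw [hsi] at hP
          exact hP.mpr rfl
        · have hmem' : X ∈ 𝒳' := Finset.mem_filter.mpr ⟨hXmem, hr⟩
          exact (mem_Wc.mp hxW).1 X hmem'
      · intro Y hYmem
        by_cases hr : ∃ i, A i = Y
        · obtain ⟨i, rfl⟩ := hr
          have him : i < m := hidx (A i) (Finset.mem_union_right _ hYmem) i rfl
          have hilt : i < H k + 2 := by
            have := hHk k
            omega
          have hP := hxP i hilt
          have hnotX : A i ∉ 𝒳 := fun hmem => (Finset.disjoint_left.mp hdisj hmem) hYmem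
          have hsi : u i = false := by
            simp only [hudef, if_pos him, hsdef]
            exact decide_eq_false hnotX
          rw [hsi] at hP
          simp only [Bool.false_eq_true, iff_false] at hP
          exact hP
        · have hmem' : Y ∈ 𝒴' := Finset.mem_filter.mpr ⟨hYmem, hr⟩
          exact (mem_Wc.mp hxW).2 Y hmem'
    refine ⟨x, ?_, hxW', hAx⟩
    have := hHk k
    omega
  constructor
  · by_contra hfin
    rw [Set.not_infinite] at hfin
    obtain ⟨B, hB⟩ := hfin.bddAbove
    obtain ⟨x, hx1, hx2, hx3⟩ := main true B
    have : x ≤ B := hB ⟨hx2, hx3.mpr rfl⟩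
    omega
  · by_contra hfin
    rw [Set.not_infinite] at hfin
    obtain ⟨B, hB⟩ := hfin.bddAbove
    obtain ⟨x, hx1, hx2, hx3⟩ := main false B
    have hxZ : x ∉ {x | x ∈ A (L x)} := by
      intro hmem
      exact absurd (hx3.mp hmem) (by simp)
    have : x ≤ B := hB ⟨hx2, hxZ⟩
    omega

lemma exists_indep : ∃ ℐ₀ : Set (Set ℕ), IndepFamily ℐ₀ := by
  classical
  set e : Finset ℕ ≃ ℕ := Denumerable.eqv (Finset ℕ) with he
  set A₀ : ℕ → Set ℕ := fun n => {x | n ∈ e.symm x} with hA₀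
  have hmemA : ∀ n (s : Finset ℕ), e s ∈ A₀ n ↔ n ∈ s := by
    intro n s
    simp [hA₀]
  have hinj : Function.Injective A₀ := by
    intro a b hab
    have hmem : e ({a} : Finset ℕ) ∈ A₀ a := (hmemA a {a}).mpr (Finset.mem_singleton_self a)
    rw [hab] at hmem
    exact (Finset.mem_singleton.mp ((hmemA b {a}).mp hmem)).symm
  have hcomb : ∀ (𝒳 𝒴 : Finset (Set ℕ)), ↑𝒳 ⊆ Set.range A₀ → ↑𝒴 ⊆ Set.range A₀ →
      Disjoint 𝒳 𝒴 → ((⋂ X ∈ 𝒳, X) ∩ ⋂ Y ∈ 𝒴, (Set.univ \ Y)).Infinite := by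
    intro 𝒳 𝒴 hX hY hd
    set idx : Set ℕ → ℕ := fun X => if h : ∃ i, A₀ i = X then h.choose else 0 with hidxdef
    have hidx : ∀ X, X ∈ 𝒳 ∪ 𝒴 → A₀ (idx X) = X := by
      intro X hXm
      have hex : ∃ i, A₀ i = X := by
        rcases Finset.mem_union.mp hXm with h | h
        · exact hX h
        · exact hY h
      simp only [hidxdef, dif_pos hex]
      exact hex.choose_spec
    set S := 𝒳.image idx with hS
    set T := 𝒴.image idx with hT
    set g : ℕ → ℕ := fun k => e (S ∪ {(S ∪ T).sup id + 1 + k}) with hg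
    have hfresh : ∀ k, (S ∪ T).sup id + 1 + k ∉ S ∪ T := by
      intro k hk
      have := Finset.le_sup (f := id) hk
      simp only [id] at this
      omega
    have hginj : Function.Injective g := by
      intro a b hab
      have h1 : S ∪ {(S ∪ T).sup id + 1 + a} = S ∪ {(S ∪ T).sup id + 1 + b} := e.injective hab
      have ha : (S ∪ T).sup id + 1 + a ∈ S ∪ {(S ∪ T).sup id + 1 + b} := by
        rw [← h1]; exact Finset.mem_union_right _ (Finset.mem_singleton_self _)
      rcases Finset.mem_union.mp ha with h | h
      · exact absurd (Finset.mem_union_left T h) (hfresh a)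
      · have := Finset.mem_singleton.mp h; omega
    apply Set.infinite_of_injective_forall_mem hginj
    intro k
    refine ⟨?_, ?_⟩
    · simp only [Set.mem_iInter]
      intro X hXm
      rw [← hidx X (Finset.mem_union_left _ hXm)]
      exact (hmemA _ _).mpr (Finset.mem_union_left _ (Finset.mem_image_of_mem idx hXm))
    · simp only [Set.mem_iInter, Set.mem_diff, Set.mem_univ, true_and]
      intro Y hYm
      rw [← hidx Y (Finset.mem_union_right _ hYm)]
      intro hmem
      have hmem' := (hmemA _ _).mp hmem
      rcases Finset.mem_union.mp hmem' with h | h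
      · obtain ⟨X, hXm, hXY⟩ := Finset.mem_image.mp h
        have : X = Y := by
          rw [← hidx X (Finset.mem_union_left _ hXm), ← hidx Y (Finset.mem_union_right _ hYm), hXY]
        subst this
        exact (Finset.disjoint_left.mp hd hXm) hYm
      · have h2 := Finset.mem_singleton.mp h
        have hmem2 : idx Y ∈ S ∪ T := Finset.mem_union_right _ (Finset.mem_image_of_mem idx hYm)
        rw [h2] at hmem2
        exact hfresh k hmem2
  refine ⟨Set.range A₀, Set.infinite_range_of_injective hinj, ?_, hcomb⟩
  rintro X ⟨n, rfl⟩
  have := hcomb {A₀ n} ∅ (by simp) (by simp) (by simp)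
  simp only [Finset.mem_singleton, Set.iInter_iInter_eq_left, Finset.notMem_empty,
    Set.iInter_of_empty, Set.iInter_univ, Set.inter_univ] at this
  exact this

lemma exists_max : ∃ ℐ : Set (Set ℕ), MaxIndepFamily ℐ := by
  classical
  obtain ⟨ℐ₀, h₀⟩ := exists_indep
  have hchain : ∀ c ⊆ {𝒥 : Set (Set ℕ) | IndepFamily 𝒥}, IsChain (· ⊆ ·) c → c.Nonempty →
      ∃ ub ∈ {𝒥 : Set (Set ℕ) | IndepFamily 𝒥}, ∀ s ∈ c, s ⊆ ub := by
    rintro c hcS hch ⟨𝒥₀, h𝒥₀⟩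
    have hfin : ∀ T : Finset (Set ℕ), ↑T ⊆ ⋃₀ c → ∃ 𝒥 ∈ c, ↑T ⊆ 𝒥 := by
      intro T
      induction T using Finset.induction_on with
      | empty => intro _; exact ⟨𝒥₀, h𝒥₀, by simp⟩
      | insert a T' ha ih =>
        intro hsub
        obtain ⟨𝒥₁, h𝒥₁, hT⟩ := ih (fun x hx => hsub (by
          simp only [Finset.coe_insert]
          exact Set.mem_insert_iff.mpr (Or.inr hx)))
        obtain ⟨𝒥₂, h𝒥₂, ha2⟩ := hsub (by
          simp only [Finset.coe_insert]
          exact Set.mem_insert a _)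
        rcases hch.total h𝒥₁ h𝒥₂ with h12 | h21
        · exact ⟨𝒥₂, h𝒥₂, by
            simp only [Finset.coe_insert]
            exact Set.insert_subset ha2 (hT.trans h12)⟩
        · exact ⟨𝒥₁, h𝒥₁, by
            simp only [Finset.coe_insert]
            exact Set.insert_subset (h21 ha2) hT⟩
    refine ⟨⋃₀ c, ⟨?_, ?_, ?_⟩, fun s hs => Set.subset_sUnion_of_mem hs⟩
    · exact (hcS h𝒥₀).1.mono (Set.subset_sUnion_of_mem h𝒥₀)
    · rintro X ⟨𝒥, h𝒥, hX𝒥⟩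
      exact (hcS h𝒥).2.1 X hX𝒥
    · intro 𝒳 𝒴 hX hY hd
      obtain ⟨𝒥, h𝒥, hsub⟩ := hfin (𝒳 ∪ 𝒴) (by
        rw [Finset.coe_union]
        exact Set.union_subset hX hY)
      refine (hcS h𝒥).2.2 𝒳 𝒴 ?_ ?_ hd
      · exact fun x hx => hsub (by rw [Finset.coe_union]; exact Or.inl hx)
      · exact fun x hx => hsub (by rw [Finset.coe_union]; exact Or.inr hx)
  obtain ⟨m, hm1, hmax⟩ := zorn_subset_nonempty _ hchain ℐ₀ h₀
  refine ⟨m, hmax.prop, ?_⟩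
  rintro ⟨Z, hZinf, hZnot, hZind⟩
  have hsub : insert Z m ⊆ m := hmax.2 hZind (Set.subset_insert Z m)
  exact hZnot (hsub (Set.mem_insert Z m))

end ShelahDI

theorem domNum_le_indepNum :
    (∀ ℐ : Set (Set ℕ), IndepFamily ℐ → #ℐ < domNum → ¬ MaxIndepFamily ℐ) ∧
    domNum ≤ indepNum := by
  have part1 : ∀ ℐ : Set (Set ℕ), IndepFamily ℐ → #ℐ < domNum → ¬ MaxIndepFamily ℐ := by
    intro ℐ hI hlt hmax
    obtain ⟨Z, hZ⟩ := ShelahDI.core ℐ hI hlt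
    apply hmax.2
    have hZinf : Z.Infinite := by
      have h1 := (hZ ∅ ∅ (by simp) (by simp) (by simp)).1
      exact h1.mono Set.inter_subset_right
    have hZnot : Z ∉ ℐ := by
      intro hZmem
      have h1 := (hZ {Z} ∅ (by simpa using hZmem) (by simp) (by simp)).2
      apply Set.not_infinite.mpr ?_ h1
      apply Set.Finite.subset (Set.finite_empty)
      rintro x ⟨hx1, hx2⟩
      exact absurd ((ShelahDI.mem_Wc.mp hx1).1 Z (Finset.mem_singleton_self Z)) hx2
    refine ⟨Z, hZinf, hZnot, hI.1.mono (Set.subset_insert _ _), ?_, ?_⟩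
    · intro X hXm
      rcases Set.mem_insert_iff.mp hXm with rfl | hXm'
      · exact hZinf
      · exact hI.2.1 X hXm'
    · intro 𝒳 𝒴 hX hY hd
      classical
      by_cases hZX : Z ∈ 𝒳
      · have hXsub : ↑(𝒳.erase Z) ⊆ ℐ := by
          intro X hXm
          rw [Finset.coe_erase] at hXm
          rcases Set.mem_insert_iff.mp (hX hXm.1) with rfl | hm
          · exact absurd rfl hXm.2
          · exact hm
        have hYsub : ↑𝒴 ⊆ ℐ := by
          intro Y hYm
          rcases Set.mem_insert_iff.mp (hY hYm) with rfl | hm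
          · exact absurd hZX (Finset.disjoint_left.mp hd.symm hYm)
          · exact hm
        have h1 := (hZ (𝒳.erase Z) 𝒴 hXsub hYsub
          (Finset.disjoint_of_subset_left (Finset.erase_subset _ _) hd)).1
        apply h1.mono
        rintro x ⟨hx1, hx2⟩
        rw [ShelahDI.mem_Wc] at hx1
        show x ∈ ShelahDI.Wc 𝒳 𝒴
        rw [ShelahDI.mem_Wc]
        refine ⟨?_, hx1.2⟩
        intro X hXm
        by_cases hXZ : X = Z
        · exact hXZ ▸ hx2
        · exact hx1.1 X (Finset.mem_erase.mpr ⟨hXZ, hXm⟩)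
      · by_cases hZY : Z ∈ 𝒴
        · have hXsub : ↑𝒳 ⊆ ℐ := by
            intro X hXm
            rcases Set.mem_insert_iff.mp (hX hXm) with rfl | hm
            · exact absurd hXm hZX
            · exact hm
          have hYsub : ↑(𝒴.erase Z) ⊆ ℐ := by
            intro Y hYm
            rw [Finset.coe_erase] at hYm
            rcases Set.mem_insert_iff.mp (hY hYm.1) with rfl | hm
            · exact absurd rfl hYm.2
            · exact hm
          have h1 := (hZ 𝒳 (𝒴.erase Z) hXsub hYsub
            (Finset.disjoint_of_subset_right (Finset.erase_subset _ _) hd)).2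
          apply h1.mono
          rintro x ⟨hx1, hx2⟩
          rw [ShelahDI.mem_Wc] at hx1
          show x ∈ ShelahDI.Wc 𝒳 𝒴
          rw [ShelahDI.mem_Wc]
          refine ⟨hx1.1, ?_⟩
          intro Y hYm
          by_cases hYZ : Y = Z
          · exact hYZ ▸ hx2
          · exact hx1.2 Y (Finset.mem_erase.mpr ⟨hYZ, hYm⟩)
        · have hXsub : ↑𝒳 ⊆ ℐ := by
            intro X hXm
            rcases Set.mem_insert_iff.mp (hX hXm) with rfl | hm
            · exact absurd hXm hZX
            · exact hm
          have hYsub : ↑𝒴 ⊆ ℐ := by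
            intro Y hYm
            rcases Set.mem_insert_iff.mp (hY hYm) with rfl | hm
            · exact absurd hYm hZY
            · exact hm
          exact hI.2.2 𝒳 𝒴 hXsub hYsub hd
  refine ⟨part1, ?_⟩
  obtain ⟨ℐm, hℐm⟩ := ShelahDI.exists_max
  refine le_csInf ⟨#↥ℐm, ⟨ℐm, hℐm, rfl⟩⟩ ?_
  rintro c ⟨ℐ, hMax, rfl⟩
  by_contra hcon
  exact part1 ℐ hMax.1 (not_le.mp hcon) hMax
end

section
/- (Ketonen) Let (C_n)_{n∈ℕ} be a decreasing sequence of infinite subsets of ℕ (C_{n+1} ⊆ C_n for all n), and let 𝒜 be a family of subsets of ℕ of cardinality strictly less than the dominating number 𝔡 such that every A ∈ 𝒜 has infinite intersection with every C_n. Then there exists a set B ⊆ ℕ such that B \ C_n is finite for every n and A ∩ B is infinite for every A ∈ 𝒜. -/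
open Cardinal Set Filter

theorem ketonen (C : ℕ → Set ℕ)
    (hCinf : ∀ n, (C n).Infinite)
    (hCdec : ∀ n, C (n + 1) ⊆ C n)
    (𝒜 : Set (Set ℕ)) (hcard : #𝒜 < domNum)
    (h𝒜 : ∀ A ∈ 𝒜, ∀ n, (A ∩ C n).Infinite) :
    ∃ B : Set ℕ, (∀ n, (B \ C n).Finite) ∧ ∀ A ∈ 𝒜, (A ∩ B).Infinite := by
  -- C is antitone
  have hmono : ∀ m n, m ≤ n → C n ⊆ C m := by
    intro m n h
    induction h with
    | refl => exact subset_rfl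
    | step h ih => exact fun x hx => (ih (hCdec _ hx) : _)
  classical
  -- choice function
  set F : Set ℕ → ℕ → ℕ := fun A n =>
    if h : (A ∩ C n).Infinite then (h.exists_gt n).choose else 0 with hF
  have hFspec : ∀ A ∈ 𝒜, ∀ n, F A n ∈ A ∩ C n ∧ n < F A n := by
    intro A hA n
    have h : (A ∩ C n).Infinite := h𝒜 A hA n
    have := (h.exists_gt n).choose_spec
    simp only [hF, dif_pos h]
    exact ⟨this.1, this.2⟩
  -- there is g frequently above each F A
  have hkey : ∃ g : ℕ → ℕ, ∀ A ∈ 𝒜, ∃ᶠ n in Filter.atTop, F A n ≤ g n := by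
    by_contra hcon
    push_neg at hcon
    have hdom : ∀ f : ℕ → ℕ, ∃ g ∈ F '' 𝒜, EvMaj g f := by
      intro f
      obtain ⟨A, hA, hAf⟩ := hcon f
      refine ⟨F A, ⟨A, hA, rfl⟩, ?_⟩
      have := hAf
      simpa [EvMaj, Nat.not_le] using this
    have h1 : domNum ≤ #(F '' 𝒜) :=
      csInf_le' ⟨F '' 𝒜, hdom, rfl⟩
    have h2 : #(F '' 𝒜) ≤ #𝒜 := Cardinal.mk_image_le
    exact absurd hcard (not_lt.mpr (h1.trans h2))
  obtain ⟨g, hg⟩ := hkey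
  refine ⟨{m | ∃ n, m ∈ C n ∧ m ≤ g n}, ?_, ?_⟩
  · intro k
    apply Set.Finite.subset (Set.finite_Iic (Finset.sup (Finset.range k) g))
    rintro m ⟨⟨n, hmn, hmg⟩, hmk⟩
    have hnk : n < k := by
      by_contra h
      exact hmk (hmono k n (not_lt.mp h) hmn)
    exact hmg.trans (Finset.le_sup (Finset.mem_range.mpr hnk))
  · intro A hA
    apply Set.infinite_of_not_bddAbove
    rintro ⟨N, hN⟩
    obtain ⟨n, hnN, hfg⟩ := Filter.frequently_atTop.mp (hg A hA) N
    have hspec := hFspec A hA n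
    have hmem : F A n ∈ A ∩ {m | ∃ k, m ∈ C k ∧ m ≤ g k} :=
      ⟨hspec.1.1, ⟨n, hspec.1.2, hfg⟩⟩
    have : F A n ≤ N := hN hmem
    omega
end
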